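/- Fix real parameters 0 < α < γ and define μ, β, δ, k, x, z as in the unduloid setup. Then the signed curvature of the generating curve vanishes at v, i.e. x'(v) z''(v) − x''(v) z'(v) = 0, if and only if sin(μv) = −(γ−α)/(γ+α); moreover, the set of such v lying in one period interval [0, π(α+γ)) has exactly two elements. -/

import Mathlib

open Real

/-- The incomplete elliptic integral of the first kind,
`F(φ, k) = ∫₀^φ (1 − k² sin²θ)^{−1/2} dθ`. -/
noncomputable def ellipticF (k φ : ℝ) : ℝ :=
  ∫ θ in (0:ℝ)..φ, (Real.sqrt (1 - k ^ 2 * Real.sin θ ^ 2))⁻¹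

/-- The incomplete elliptic integral of the second kind,
`E(φ, k) = ∫₀^φ (1 − k² sin²θ)^{1/2} dθ`. -/
noncomputable def ellipticE (k φ : ℝ) : ℝ :=
  ∫ θ in (0:ℝ)..φ, Real.sqrt (1 - k ^ 2 * Real.sin θ ^ 2)

/-!
Writing `s = sin (μ v)`, the curve satisfies `x² = β s + δ`, and the half-angle identity
`sin² (μ v / 2 - π / 4) = (1 - s) / 2` turns the elliptic integrands into `x / γ`, so that
`x' = β μ cos (μ v) / (2 x)` and `z' = (μ / 2) (α γ / x + x)`. Differentiating once more,
`x' z'' - x'' z' = μ³ β (α + γ) ((γ - α) + (α + γ) s) / (8 x²)`, which vanishes exactly when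
`s = -(γ - α) / (γ + α)`. Since `0 < (γ - α) / (γ + α) < 1`, this value of the sine is taken
exactly twice on the period `[0, 2π)` of `μ v`.
-/

open Set

lemma sin_eq_neg_iff_of_mem_Ico {r θ : ℝ} (hr0 : 0 < r) (hr1 : r < 1)
    (hθ : θ ∈ Ico 0 (2 * π)) :
    sin θ = -r ↔ θ = π + arcsin r ∨ θ = 2 * π - arcsin r := by
  have ha0 : 0 < arcsin r := arcsin_pos.2 hr0
  have ha1 : arcsin r < π / 2 := arcsin_lt_pi_div_two.2 hr1
  have hsin : sin (arcsin r) = r := sin_arcsin (by linarith) hr1.le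
  obtain ⟨hθ0, hθ1⟩ := hθ
  constructor
  · intro h
    rw [← hsin, ← sin_neg, eq_comm, sin_eq_sin_iff] at h
    obtain ⟨n, hn | hn⟩ := h
    · have hn1 : n = 1 := by
        have hpos : (0 : ℝ) < n := by nlinarith [pi_pos]
        have hlt : (n : ℝ) < 2 := by nlinarith [pi_pos]
        have : (0 : ℤ) < n := by exact_mod_cast hpos
        have : n < 2 := by exact_mod_cast hlt
        omega
      subst hn1
      push_cast at hn
      right; linarith
    · have hn0 : n = 0 := by
        have hpos : (-1 : ℝ) < n := by nlinarith [pi_pos]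
        have hlt : (n : ℝ) < 1 := by nlinarith [pi_pos]
        have : (-1 : ℤ) < n := by exact_mod_cast hpos
        have : n < 1 := by exact_mod_cast hlt
        omega
      subst hn0
      push_cast at hn
      left; linarith
  · rintro (rfl | rfl)
    · rw [add_comm, sin_add_pi, hsin]
    · rw [sin_two_pi_sub, hsin]

lemma ncard_setOf_sin_eq_neg {r : ℝ} (hr0 : 0 < r) (hr1 : r < 1) :
    {θ | θ ∈ Ico 0 (2 * π) ∧ sin θ = -r}.ncard = 2 := by
  have ha0 : 0 < arcsin r := arcsin_pos.2 hr0
  have ha1 : arcsin r < π / 2 := arcsin_lt_pi_div_two.2 hr1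
  have hset : {θ | θ ∈ Ico 0 (2 * π) ∧ sin θ = -r} = {π + arcsin r, 2 * π - arcsin r} := by
    ext θ
    constructor
    · rintro ⟨hθ, h⟩
      exact (sin_eq_neg_iff_of_mem_Ico hr0 hr1 hθ).1 h
    · intro h
      have hθ : θ ∈ Ico 0 (2 * π) := by
        rcases h with rfl | rfl <;> constructor <;> linarith [pi_pos]
      exact ⟨hθ, (sin_eq_neg_iff_of_mem_Ico hr0 hr1 hθ).2 h⟩
  rw [hset, ncard_pair]
  linarith

lemma ncard_setOf_mem_Ico_mul {μ : ℝ} (hμ : 0 < μ) (a b : ℝ) (p : ℝ → Prop) :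
    {v | v ∈ Ico a b ∧ p (μ * v)}.ncard = {t | t ∈ Ico (μ * a) (μ * b) ∧ p t}.ncard := by
  have hpre : {v | v ∈ Ico a b ∧ p (μ * v)} =
      (μ * ·) ⁻¹' {t | t ∈ Ico (μ * a) (μ * b) ∧ p t} := by
    ext v
    simp only [mem_ofPred_eq, mem_preimage, mem_Ico, mul_le_mul_iff_right₀ hμ,
      mul_lt_mul_iff_right₀ hμ]
  rw [hpre, ncard_preimage_of_injective_subset_range (mul_right_injective₀ hμ.ne')]
  exact fun t _ => ⟨t / μ, mul_div_cancel₀ t hμ.ne'⟩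

lemma one_sub_sq_mul_sin_sq_pos {k : ℝ} (hk : k ^ 2 < 1) (θ : ℝ) :
    0 < 1 - k ^ 2 * sin θ ^ 2 := by
  nlinarith [sin_sq_le_one θ, sq_nonneg k]

lemma hasDerivAt_ellipticE (k φ : ℝ) :
    HasDerivAt (ellipticE k) √(1 - k ^ 2 * sin φ ^ 2) φ :=
  ((by fun_prop : Continuous fun θ => √(1 - k ^ 2 * sin θ ^ 2)).integral_hasStrictDerivAt
    0 φ).hasDerivAt

lemma hasDerivAt_ellipticF {k : ℝ} (hk : k ^ 2 < 1) (φ : ℝ) :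
    HasDerivAt (ellipticF k) (√(1 - k ^ 2 * sin φ ^ 2))⁻¹ φ := by
  have hcont : Continuous fun θ => (√(1 - k ^ 2 * sin θ ^ 2))⁻¹ :=
    Continuous.inv₀ (by fun_prop) fun θ => (sqrt_pos.2 (one_sub_sq_mul_sin_sq_pos hk θ)).ne'
  exact (hcont.integral_hasStrictDerivAt 0 φ).hasDerivAt

lemma sin_sq_half_sub_pi_div_four (t : ℝ) : sin (t / 2 - π / 4) ^ 2 = (1 - sin t) / 2 := by
  rw [sin_sq_eq_half_sub, show 2 * (t / 2 - π / 4) = t - π / 2 by ring, cos_sub_pi_div_two]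
  ring

noncomputable def curvatureNumerator (x z : ℝ → ℝ) (v : ℝ) : ℝ :=
  deriv x v * deriv (deriv z) v - deriv (deriv x) v * deriv z v

lemma curvatureNumerator_eq {α γ β μ : ℝ} {x z : ℝ → ℝ} (hx0 : ∀ v, x v ≠ 0)
    (hx : ∀ v, HasDerivAt x (β * μ * cos (μ * v) / (2 * x v)) v)
    (hz : ∀ v, HasDerivAt z (μ / 2 * (α * γ / x v + x v)) v) (v : ℝ) :
    curvatureNumerator x z v =
      μ ^ 3 * β * (β * cos (μ * v) ^ 2 + sin (μ * v) * (α * γ + x v ^ 2)) / (4 * x v ^ 2) := by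
  have hlin : HasDerivAt (μ * ·) μ v := by simpa using (hasDerivAt_id v).const_mul μ
  have hx' := (hlin.cos.const_mul (β * μ)).fun_div ((hx v).const_mul 2)
    (mul_ne_zero two_ne_zero (hx0 v))
  have hz' :=
    (((hasDerivAt_const v (α * γ)).fun_div (hx v) (hx0 v)).fun_add (hx v)).const_mul (μ / 2)
  rw [curvatureNumerator, funext fun v => (hx v).deriv, funext fun v => (hz v).deriv,
    hx'.deriv, hz'.deriv]
  have := hx0 v
  field_simp
  ring

section Unduloid

variable {α γ μ β δ k : ℝ} {x z : ℝ → ℝ}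

lemma unduloid_radicand_pos (hα : 0 < α) (hαγ : α < γ) (hβ : β = (γ ^ 2 - α ^ 2) / 2)
    (hδ : δ = (γ ^ 2 + α ^ 2) / 2) (t : ℝ) : 0 < β * sin t + δ := by
  subst hβ hδ
  nlinarith [mul_nonneg (by nlinarith : 0 ≤ γ ^ 2 - α ^ 2)
    (by linarith [neg_one_le_sin t] : 0 ≤ 1 + sin t), mul_pos hα hα]

lemma unduloid_x_pos (hα : 0 < α) (hαγ : α < γ) (hβ : β = (γ ^ 2 - α ^ 2) / 2)
    (hδ : δ = (γ ^ 2 + α ^ 2) / 2) (hx : ∀ v, x v = √(β * sin (μ * v) + δ)) (v : ℝ) :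
    0 < x v := by
  rw [hx]
  exact sqrt_pos.2 (unduloid_radicand_pos hα hαγ hβ hδ _)

lemma unduloid_sqrt_eq (hα : 0 < α) (hαγ : α < γ) (hβ : β = (γ ^ 2 - α ^ 2) / 2)
    (hδ : δ = (γ ^ 2 + α ^ 2) / 2) (hk : k = √(γ ^ 2 - α ^ 2) / γ) (t : ℝ) :
    √(1 - k ^ 2 * sin (t / 2 - π / 4) ^ 2) = √(β * sin t + δ) / γ := by
  have hγ : 0 < γ := hα.trans hαγ
  have hsq : 1 - k ^ 2 * sin (t / 2 - π / 4) ^ 2 = (β * sin t + δ) / γ ^ 2 := by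
    rw [sin_sq_half_sub_pi_div_four, hk, div_pow, sq_sqrt (by nlinarith), hβ, hδ]
    field_simp
    ring
  rw [hsq, sqrt_div' _ (sq_nonneg γ), sqrt_sq hγ.le]

lemma hasDerivAt_unduloid_x (hα : 0 < α) (hαγ : α < γ) (hβ : β = (γ ^ 2 - α ^ 2) / 2)
    (hδ : δ = (γ ^ 2 + α ^ 2) / 2) (hx : ∀ v, x v = √(β * sin (μ * v) + δ)) (v : ℝ) :
    HasDerivAt x (β * μ * cos (μ * v) / (2 * x v)) v := by
  have hlin : HasDerivAt (μ * ·) μ v := by simpa using (hasDerivAt_id v).const_mul μ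
  rw [funext hx]
  convert ((hlin.sin.const_mul β).add_const δ).sqrt
    (unduloid_radicand_pos hα hαγ hβ hδ (μ * v)).ne' using 1
  ring

lemma hasDerivAt_unduloid_z (hα : 0 < α) (hαγ : α < γ) (hβ : β = (γ ^ 2 - α ^ 2) / 2)
    (hδ : δ = (γ ^ 2 + α ^ 2) / 2) (hk : k = √(γ ^ 2 - α ^ 2) / γ)
    (hx : ∀ v, x v = √(β * sin (μ * v) + δ))
    (hz : ∀ v, z v = α * ellipticF k (μ * v / 2 - π / 4) + γ * ellipticE k (μ * v / 2 - π / 4))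
    (v : ℝ) :
    HasDerivAt z (μ / 2 * (α * γ / x v + x v)) v := by
  have hγ : 0 < γ := hα.trans hαγ
  have hk1 : k ^ 2 < 1 := by
    rw [hk, div_pow, sq_sqrt (by nlinarith), div_lt_one (by positivity)]
    nlinarith
  have hφ : HasDerivAt (fun v => μ * v / 2 - π / 4) (μ / 2) v := by
    simpa using (((hasDerivAt_id v).const_mul μ).div_const 2).sub_const (π / 4)
  have hx0 := (unduloid_x_pos hα hαγ hβ hδ hx v).ne'
  rw [funext hz]
  refine ((((hasDerivAt_ellipticF hk1 _).comp v hφ).const_mul α).add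
    (((hasDerivAt_ellipticE k _).comp v hφ).const_mul γ)).congr_deriv ?_
  rw [unduloid_sqrt_eq hα hαγ hβ hδ hk, ← hx]
  field_simp

lemma unduloid_curvatureNumerator_eq (hα : 0 < α) (hαγ : α < γ)
    (hβ : β = (γ ^ 2 - α ^ 2) / 2) (hδ : δ = (γ ^ 2 + α ^ 2) / 2)
    (hk : k = √(γ ^ 2 - α ^ 2) / γ) (hx : ∀ v, x v = √(β * sin (μ * v) + δ))
    (hz : ∀ v, z v = α * ellipticF k (μ * v / 2 - π / 4) + γ * ellipticE k (μ * v / 2 - π / 4))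
    (v : ℝ) :
    curvatureNumerator x z v =
      μ ^ 3 * β * (α + γ) * ((γ - α) + (α + γ) * sin (μ * v)) / (8 * (β * sin (μ * v) + δ)) := by
  have hP := unduloid_radicand_pos hα hαγ hβ hδ (μ * v)
  have hx2 : x v ^ 2 = β * sin (μ * v) + δ := by rw [hx, sq_sqrt hP.le]
  rw [curvatureNumerator_eq (fun v => (unduloid_x_pos hα hαγ hβ hδ hx v).ne')
    (hasDerivAt_unduloid_x hα hαγ hβ hδ hx) (hasDerivAt_unduloid_z hα hαγ hβ hδ hk hx hz),
    hx2, cos_sq']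
  rw [div_eq_div_iff (by positivity) (by positivity), hβ, hδ]
  ring

lemma unduloid_curvatureNumerator_eq_zero_iff (hα : 0 < α) (hαγ : α < γ) (hμ : μ ≠ 0)
    (hβ : β = (γ ^ 2 - α ^ 2) / 2) (hδ : δ = (γ ^ 2 + α ^ 2) / 2)
    (hk : k = √(γ ^ 2 - α ^ 2) / γ) (hx : ∀ v, x v = √(β * sin (μ * v) + δ))
    (hz : ∀ v, z v = α * ellipticF k (μ * v / 2 - π / 4) + γ * ellipticE k (μ * v / 2 - π / 4))
    (v : ℝ) :
    curvatureNumerator x z v = 0 ↔ sin (μ * v) = -((γ - α) / (γ + α)) := by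
  have hP := unduloid_radicand_pos hα hαγ hβ hδ (μ * v)
  have hβ0 : 0 < β := by rw [hβ]; nlinarith
  have hsum : 0 < α + γ := by linarith
  rw [unduloid_curvatureNumerator_eq hα hαγ hβ hδ hk hx hz, div_eq_zero_iff,
    or_iff_left (by positivity), mul_eq_zero, or_iff_right (by positivity)]
  rw [← neg_div, eq_div_iff (by linarith)]
  constructor <;> intro h <;> linarith

end Unduloid

/-- In the unduloid setup with parameters `0 < α < γ`, the signed curvature
`x'z'' − x''z'` of the generating curve vanishes at `v` iff `sin(μv) = −(γ−α)/(γ+α)`,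
and the set of such `v` in one period interval `[0, π(α+γ))` has exactly two elements. -/
theorem statement_11 (α γ : ℝ) (hα : 0 < α) (hαγ : α < γ)
    (μ β δ k : ℝ) (hμ : μ = 2 / (α + γ)) (hβ : β = (γ ^ 2 - α ^ 2) / 2)
    (hδ : δ = (γ ^ 2 + α ^ 2) / 2) (hk : k = Real.sqrt (γ ^ 2 - α ^ 2) / γ)
    (x z : ℝ → ℝ)
    (hx : ∀ v, x v = Real.sqrt (β * Real.sin (μ * v) + δ))
    (hz : ∀ v, z v = α * ellipticF k (μ * v / 2 - Real.pi / 4) +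
      γ * ellipticE k (μ * v / 2 - Real.pi / 4)) :
    (∀ v : ℝ,
      deriv x v * deriv (deriv z) v - deriv (deriv x) v * deriv z v = 0 ↔
        Real.sin (μ * v) = -((γ - α) / (γ + α))) ∧
    {v : ℝ | v ∈ Set.Ico (0 : ℝ) (Real.pi * (α + γ)) ∧
      deriv x v * deriv (deriv z) v - deriv (deriv x) v * deriv z v = 0}.ncard = 2 := by
  have hsum : 0 < α + γ := by linarith
  have hμ0 : 0 < μ := by rw [hμ]; positivity
  have hiff := unduloid_curvatureNumerator_eq_zero_iff hα hαγ hμ0.ne' hβ hδ hk hx hz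
  refine ⟨hiff, ?_⟩
  have hperiod : μ * (π * (α + γ)) = 2 * π := by
    rw [hμ]
    field_simp
  calc _ = {v | v ∈ Ico 0 (π * (α + γ)) ∧ sin (μ * v) = -((γ - α) / (γ + α))}.ncard :=
        congrArg ncard (ext fun v => and_congr_right fun _ => hiff v)
    _ = {t | t ∈ Ico 0 (2 * π) ∧ sin t = -((γ - α) / (γ + α))}.ncard := by
      simpa only [mul_zero, hperiod] using
        ncard_setOf_mem_Ico_mul hμ0 0 (π * (α + γ)) (sin · = -((γ - α) / (γ + α)))
    _ = 2 := ncard_setOf_sin_eq_neg (div_pos (by linarith) (by linarith))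
        ((div_lt_one (by linarith)).2 (by linarith))
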